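/- arXiv:0807.4741 — 5 statements merged into one kernel-verified Lean document; each statement's English description precedes it below -/
import Mathlib

section
/- Let ρ be a density matrix (positive semidefinite with trace 1) on a Hilbert space, with eigenvalues σ(1) ≥ σ(2) ≥ ... ≥ 0. Suppose there exist 0 < c < 1, R > 1, and an increasing sequence of positive integers s_n with s_1 > 1 and s_{n+1}/s_n ≤ R for all n ≥ 1, such that Σ_{α ≥ s_n + 1} σ(α) ≤ c^n for all n ≥ 1. Then the von Neumann entropy S(ρ) = −Σ_α σ(α) ln σ(α) satisfies S(ρ) ≤ ln s_1 + (c/(1−c)) ln R + (1/(1−c)) H₂(1−c), where H₂(x) = −x ln x − (1−x) ln(1−x). -/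
open Finset Real


/-- Entropy bound for an eigenvalue sequence (0-indexed: `σ 0` is the largest
eigenvalue; the eigenvalues of a finite-dimensional density matrix, listed in
decreasing order and padded with zeros). The constraint `∑_{α ≥ s n + 1} σ(α) ≤ cⁿ`
in 1-based indexing becomes `∑_{α : s n ≤ α} σ α ≤ cⁿ` in 0-based indexing. -/

theorem stmt_3 (σ : ℕ → ℝ) (hdec : Antitone σ) (hnonneg : ∀ α, 0 ≤ σ α)
    (hfin : ∃ N, ∀ α ≥ N, σ α = 0) (hsum : ∑' α, σ α = 1)
    (c R : ℝ) (hc : 0 < c) (hc1 : c < 1) (hR : 1 < R)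
    (s : ℕ → ℕ) (hmono : StrictMono s) (hs1 : 1 < s 1)
    (hratio : ∀ n ≥ 1, (s (n + 1) : ℝ) ≤ R * s n)
    (hconstraint : ∀ n ≥ 1, ∑' α : {α : ℕ // s n ≤ α}, σ α ≤ c ^ n) :
    ∑' α, -(σ α * Real.log (σ α)) ≤
      Real.log (s 1) + c / (1 - c) * Real.log R +
        1 / (1 - c) * (-(c * Real.log c) - (1 - c) * Real.log (1 - c)) := by
  classical
  obtain ⟨N₀, hN₀⟩ := hfin
  set N := max N₀ 1 with hNdef
  have hN : ∀ α, N ≤ α → σ α = 0 := fun α hα => hN₀ α (le_trans (le_max_left _ _) hα)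
  have hN1 : 1 ≤ N := le_max_right _ _
  have hc1' : (0:ℝ) < 1 - c := by linarith
  have hR0 : (0:ℝ) < R := by linarith
  have hs1R : (0:ℝ) < (s 1 : ℝ) := by exact_mod_cast Nat.lt_of_lt_of_le Nat.zero_lt_one hs1.le
  have hout : ∀ b, b ∉ range N → σ b = 0 := by
    intro b hb
    exact hN b (not_lt.mp fun h => hb (mem_range.mpr h))
  have hsumN : ∑ α ∈ range N, σ α = 1 := by
    rw [← hsum]; exact (tsum_eq_sum hout).symm
  have hLHS : ∑' α, -(σ α * Real.log (σ α)) = ∑ α ∈ range N, -(σ α * Real.log (σ α)) := by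
    apply tsum_eq_sum
    intro b hb
    rw [hout b hb]; simp
  -- constraint as finite sum
  have hconstr : ∀ n, 1 ≤ n → ∑ α ∈ (range N).filter (fun α => s n ≤ α), σ α ≤ c ^ n := by
    intro n hn
    have h : ∑' (x : ↥{α : ℕ | s n ≤ α}), σ ↑x ≤ c ^ n := hconstraint n hn
    rw [_root_.tsum_subtype] at h
    rw [tsum_eq_sum (s := range N) ?side] at h
    case side =>
      intro b hb
      by_cases hb' : s n ≤ b
      · simp [Set.indicator_apply, hb', hout b hb]
      · simp [Set.indicator_apply, hb']
    calc ∑ α ∈ (range N).filter (fun α => s n ≤ α), σ α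
        = ∑ α ∈ range N, Set.indicator {α : ℕ | s n ≤ α} σ α := by
          rw [Finset.sum_filter]
          exact Finset.sum_congr rfl (fun x _ => by simp [Set.indicator_apply])
      _ ≤ c ^ n := h
  -- block index
  set f : ℕ → ℕ := fun α => Nat.findGreatest (fun n => s n ≤ α) N with hfdef
  have hfeq : ∀ α, Nat.findGreatest (fun n => s n ≤ α) N = f α := fun α => by rw [hfdef]
  have hfle : ∀ α, f α ≤ N := fun α => (hfeq α) ▸ Nat.findGreatest_le N
  have hfs : ∀ α, 1 ≤ f α → s (f α) ≤ α := by
    intro α h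
    exact Nat.findGreatest_of_ne_zero (P := fun n => s n ≤ α) (n := N) (hfeq α) (by omega)
  have hflt : ∀ α, α < N → α < s (f α + 1) := by
    intro α hα
    have hfN : f α < N := by
      rcases Nat.eq_zero_or_pos (f α) with h0 | h0
      · omega
      · have h1 := hfs α h0
        have h2 : f α ≤ s (f α) := hmono.le_apply
        omega
    have h3 : Nat.findGreatest (fun n => s n ≤ α) N < f α + 1 := by rw [hfeq α]; omega
    have := Nat.findGreatest_is_greatest (P := fun n => s n ≤ α) (n := N) h3 (by omega)
    omega
  have hf0 : ∀ α, f α = 0 → α < s 1 := by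
    intro α h
    by_contra hge
    push_neg at hge
    have := Nat.le_findGreatest (P := fun n => s n ≤ α) (m := 1) hN1 hge
    rw [hfeq α] at this
    omega
  -- f as a sum of indicators
  have hfilter : ∀ α, α < N → (Icc 1 N).filter (fun n => s n ≤ α) = Icc 1 (f α) := by
    intro α hα
    ext n
    simp only [mem_filter, mem_Icc]
    constructor
    · rintro ⟨⟨h1, h2⟩, h3⟩
      refine ⟨h1, ?_⟩
      by_contra hgt
      push_neg at hgt
      have h4 : s (f α + 1) ≤ s n := hmono.monotone hgt
      have := hflt α hα
      omega
    · rintro ⟨h1, h2⟩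
      have hle : s n ≤ s (f α) := hmono.monotone h2
      have := hfs α (le_trans h1 h2)
      exact ⟨⟨h1, le_trans h2 (hfle α)⟩, by omega⟩
  have hfcard : ∀ α, α < N → (f α : ℝ) = ∑ n ∈ Icc 1 N, (if s n ≤ α then (1:ℝ) else 0) := by
    intro α hα
    rw [Finset.sum_boole, hfilter α hα]
    simp
  -- geometric bound
  have hgeom : ∀ K : ℕ, ∑ i ∈ range K, c ^ i ≤ 1 / (1 - c) := by
    intro K
    have hKey : ∑ i ∈ range K, c ^ i = (1 - c ^ K) / (1 - c) := by
      rw [eq_div_iff (ne_of_gt hc1')]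
      linear_combination -geom_sum_mul c K
    have hp := pow_pos hc K
    rw [hKey, div_le_div_iff₀ hc1' hc1']
    nlinarith
  -- T := ∑ σ α * f α ≤ c/(1-c)
  have hT : ∑ α ∈ range N, σ α * (f α : ℝ) ≤ c / (1 - c) := by
    calc ∑ α ∈ range N, σ α * (f α : ℝ)
        = ∑ α ∈ range N, ∑ n ∈ Icc 1 N, (if s n ≤ α then σ α else 0) := by
          apply Finset.sum_congr rfl; intro α hα
          rw [hfcard α (mem_range.mp hα), Finset.mul_sum]
          apply Finset.sum_congr rfl; intro n _
          by_cases h : s n ≤ α <;> simp [h]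
      _ = ∑ n ∈ Icc 1 N, ∑ α ∈ range N, (if s n ≤ α then σ α else 0) := Finset.sum_comm
      _ = ∑ n ∈ Icc 1 N, ∑ α ∈ (range N).filter (fun α => s n ≤ α), σ α := by
          exact Finset.sum_congr rfl (fun n _ => (Finset.sum_filter _ _).symm)
      _ ≤ ∑ n ∈ Icc 1 N, c ^ n :=
          Finset.sum_le_sum (fun n hn => hconstr n (mem_Icc.mp hn).1)
      _ = c * ∑ i ∈ range N, c ^ i := by
          rw [Finset.mul_sum, ← Finset.Ico_add_one_right_eq_Icc, Finset.sum_Ico_eq_sum_range]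
          exact Finset.sum_congr (by norm_num) (fun i _ => by rw [pow_add, pow_one])
      _ ≤ c * (1 / (1 - c)) := by
          exact mul_le_mul_of_nonneg_left (hgeom N) hc.le
      _ = c / (1 - c) := by ring
  -- block sizes
  set b : ℕ → ℕ := fun n => if n = 0 then s 1 else s (n + 1) - s n with hbdef
  have hbpos : ∀ n, 0 < b n := by
    intro n
    cases n with
    | zero =>
      have h0 : b 0 = s 1 := by rw [hbdef]; simp
      omega
    | succ m =>
      simp only [hbdef, Nat.succ_ne_zero, if_false]
      exact Nat.sub_pos_of_lt (hmono (by omega))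
  have hbposR : ∀ n, (0:ℝ) < (b n : ℝ) := fun n => by exact_mod_cast hbpos n
  have hsR : ∀ n : ℕ, (s (n + 1) : ℝ) ≤ R ^ n * s 1 := by
    intro n
    induction n with
    | zero => simp
    | succ m ih =>
      calc (s (m + 2) : ℝ) ≤ R * s (m + 1) := hratio (m + 1) (by omega)
        _ ≤ R * (R ^ m * s 1) := by
            exact mul_le_mul_of_nonneg_left ih hR0.le
        _ = R ^ (m + 1) * s 1 := by ring
  have hbR : ∀ n : ℕ, (b n : ℝ) ≤ (s 1 : ℝ) * R ^ n := by
    intro n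
    cases n with
    | zero => simp [hbdef]
    | succ m =>
      simp only [hbdef, Nat.succ_ne_zero, if_false]
      calc ((s (m + 2) - s (m + 1) : ℕ) : ℝ) ≤ (s (m + 2) : ℝ) := by
            exact_mod_cast Nat.sub_le _ _
        _ ≤ R ^ (m + 1) * s 1 := hsR (m + 1)
        _ = (s 1 : ℝ) * R ^ (m + 1) := by ring
  -- reference distribution
  set q : ℕ → ℝ := fun α => (1 - c) * c ^ (f α) / (b (f α) : ℝ) with hqdef
  have hqpos : ∀ α, 0 < q α := by
    intro α
    exact div_pos (mul_pos hc1' (pow_pos hc _)) (hbposR _)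
  -- fibers of f are no bigger than blocks
  have hfiber : ∀ n, ((range N).filter (fun α => f α = n)).card ≤ b n := by
    intro n
    cases n with
    | zero =>
      have hsub : (range N).filter (fun α => f α = 0) ⊆ range (s 1) := by
        intro α hα
        rw [mem_filter] at hα
        exact mem_range.mpr (hf0 α hα.2)
      calc _ ≤ (range (s 1)).card := Finset.card_le_card hsub
        _ = s 1 := by simp
        _ = b 0 := by simp [hbdef]
    | succ m =>
      have hsub : (range N).filter (fun α => f α = m + 1) ⊆ Ico (s (m + 1)) (s (m + 1 + 1)) := by
        intro α hα
        rw [mem_filter, mem_range] at hα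
        obtain ⟨hα1, hα2⟩ := hα
        rw [mem_Ico]
        constructor
        · have h5 := hfs α (by omega)
          rw [hα2] at h5
          exact h5
        · have h5 := hflt α hα1
          rw [hα2] at h5
          exact h5
      calc _ ≤ (Ico (s (m + 1)) (s (m + 1 + 1))).card := Finset.card_le_card hsub
        _ = s (m + 1 + 1) - s (m + 1) := Nat.card_Ico _ _
        _ = b (m + 1) := by rw [hbdef]; simp
  -- ∑ q ≤ 1
  have hqsum : ∑ α ∈ range N, q α ≤ 1 := by
    have hsplit : ∑ α ∈ range N, q α
        = ∑ n ∈ range (N + 1), ∑ α ∈ (range N).filter (fun α => f α = n), q α := by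
      exact (Finset.sum_fiberwise_of_maps_to
        (fun α hα => mem_range.mpr (Nat.lt_succ_of_le (hfle α))) q).symm
    rw [hsplit]
    calc ∑ n ∈ range (N + 1), ∑ α ∈ (range N).filter (fun α => f α = n), q α
        ≤ ∑ n ∈ range (N + 1), (1 - c) * c ^ n := by
          apply Finset.sum_le_sum
          intro n _
          have hval : ∀ α ∈ (range N).filter (fun α => f α = n),
              q α = (1 - c) * c ^ n / (b n : ℝ) := by
            intro α hα
            rw [mem_filter] at hα
            rw [hqdef]
            simp only [hα.2]
          rw [Finset.sum_congr rfl hval, Finset.sum_const, nsmul_eq_mul]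
          have hcard : (((range N).filter (fun α => f α = n)).card : ℝ) ≤ (b n : ℝ) := by
            exact_mod_cast hfiber n
          rw [div_eq_mul_inv, ← mul_assoc]
          calc (((range N).filter (fun α => f α = n)).card : ℝ) * ((1 - c) * c ^ n) * ((b n : ℝ))⁻¹
              ≤ (b n : ℝ) * ((1 - c) * c ^ n) * ((b n : ℝ))⁻¹ := by
                apply mul_le_mul_of_nonneg_right
                · exact mul_le_mul_of_nonneg_right hcard (by positivity)
                · positivity
            _ = (1 - c) * c ^ n := by
                rw [mul_assoc, mul_comm, mul_assoc]
                rw [inv_mul_cancel₀ (ne_of_gt (hbposR n)), mul_one]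
      _ = (1 - c) * ∑ n ∈ range (N + 1), c ^ n := by rw [Finset.mul_sum]
      _ ≤ (1 - c) * (1 / (1 - c)) := mul_le_mul_of_nonneg_left (hgeom (N + 1)) hc1'.le
      _ = 1 := by field_simp
  -- Gibbs inequality
  have hgibbs : ∑ α ∈ range N, -(σ α * Real.log (σ α))
      ≤ ∑ α ∈ range N, σ α * (-(Real.log (q α))) := by
    have key : ∀ α ∈ range N,
        -(σ α * Real.log (σ α)) - σ α * (-(Real.log (q α))) ≤ q α - σ α := by
      intro α _
      rcases eq_or_lt_of_le (hnonneg α) with h0 | h0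
      · rw [← h0]; simp [(hqpos α).le]
      · have hq := hqpos α
        have hlog : Real.log (q α / σ α) ≤ q α / σ α - 1 :=
          Real.log_le_sub_one_of_pos (div_pos hq h0)
        rw [Real.log_div (ne_of_gt hq) (ne_of_gt h0)] at hlog
        have := mul_le_mul_of_nonneg_left hlog h0.le
        have hne : σ α ≠ 0 := ne_of_gt h0
        calc -(σ α * Real.log (σ α)) - σ α * (-(Real.log (q α)))
            = σ α * (Real.log (q α) - Real.log (σ α)) := by ring
          _ ≤ σ α * (q α / σ α - 1) := this
          _ = q α - σ α := by field_simp
    have hsum2 := Finset.sum_le_sum key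
    rw [Finset.sum_sub_distrib, Finset.sum_sub_distrib, hsumN] at hsum2
    linarith [hqsum]
  -- bound on -log q
  have hlogq : ∀ α, -(Real.log (q α))
      ≤ (Real.log (s 1) - Real.log (1 - c)) + (f α : ℝ) * (Real.log R - Real.log c) := by
    intro α
    have h1 : Real.log (q α)
        = Real.log (1 - c) + (f α : ℝ) * Real.log c - Real.log (b (f α) : ℝ) := by
      rw [hqdef]
      simp only []
      rw [Real.log_div (by positivity) (ne_of_gt (hbposR _)),
        Real.log_mul (ne_of_gt hc1') (by positivity), Real.log_pow]
    have h2 : Real.log (b (f α) : ℝ) ≤ Real.log (s 1) + (f α : ℝ) * Real.log R := by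
      calc Real.log (b (f α) : ℝ) ≤ Real.log ((s 1 : ℝ) * R ^ (f α)) :=
            Real.log_le_log (hbposR _) (hbR _)
        _ = Real.log (s 1) + (f α : ℝ) * Real.log R := by
            rw [Real.log_mul (ne_of_gt hs1R) (by positivity), Real.log_pow]
    have : -(Real.log (q α)) = Real.log (b (f α) : ℝ) - (f α : ℝ) * Real.log c
        - Real.log (1 - c) := by rw [h1]; ring
    rw [this]
    linarith
  -- put it together
  have hlogR : 0 < Real.log R := Real.log_pos hR
  have hlogc : Real.log c < 0 := Real.log_neg hc hc1
  have hfinal : ∑ α ∈ range N, σ α * (-(Real.log (q α)))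
      ≤ (Real.log (s 1) - Real.log (1 - c)) + (Real.log R - Real.log c) * (c / (1 - c)) := by
    calc ∑ α ∈ range N, σ α * (-(Real.log (q α)))
        ≤ ∑ α ∈ range N, σ α * ((Real.log (s 1) - Real.log (1 - c))
            + (f α : ℝ) * (Real.log R - Real.log c)) := by
          apply Finset.sum_le_sum
          intro α _
          exact mul_le_mul_of_nonneg_left (hlogq α) (hnonneg α)
      _ = (Real.log (s 1) - Real.log (1 - c)) * ∑ α ∈ range N, σ α
            + (Real.log R - Real.log c) * ∑ α ∈ range N, σ α * (f α : ℝ) := by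
          rw [Finset.mul_sum, Finset.mul_sum, ← Finset.sum_add_distrib]
          apply Finset.sum_congr rfl
          intro α _
          ring
      _ ≤ (Real.log (s 1) - Real.log (1 - c)) + (Real.log R - Real.log c) * (c / (1 - c)) := by
          rw [hsumN, mul_one]
          have : (Real.log R - Real.log c) * ∑ α ∈ range N, σ α * (f α : ℝ)
              ≤ (Real.log R - Real.log c) * (c / (1 - c)) :=
            mul_le_mul_of_nonneg_left hT (by linarith)
          linarith
  have hEq : (Real.log (s 1) - Real.log (1 - c)) + (Real.log R - Real.log c) * (c / (1 - c))
      = Real.log (s 1) + c / (1 - c) * Real.log R +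
        1 / (1 - c) * (-(c * Real.log c) - (1 - c) * Real.log (1 - c)) := by
    field_simp
    ring
  rw [hLHS, ← hEq]
  exact le_trans hgibbs hfinal
end

section
/- Let {e_α}, {f_β} be orthonormal sets in Hilbert spaces H₁, H₂ respectively, let ψ = Σ_α √σ(α) e_α ⊗ ẽ_α and φ = Σ_{β=1}^s √τ(β) f_β ⊗ f̃_β be two unit vectors in H₁ ⊗ H₂ given in Schmidt form (with {ẽ_α}, {f̃_β} orthonormal in H₂, σ(α) decreasing, Σσ(α) = Σ τ(β) = 1, and the Schmidt rank of φ at most s). Then |⟨φ, ψ⟩|² ≤ Σ_{α ≤ s} σ(α). -/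
open scoped InnerProductSpace

theorem sum_comm4 {M : Type*} [AddCommMonoid M] {i1 i2 i3 i4 : Type*}
    [Fintype i1] [Fintype i2] [Fintype i3] [Fintype i4] (g : i1 → i2 → i3 → i4 → M) :
    ∑ a, ∑ b, ∑ c, ∑ d, g a b c d = ∑ d, ∑ c, ∑ b, ∑ a, g a b c d := by
  calc ∑ a, ∑ b, ∑ c, ∑ d, g a b c d
      = ∑ b, ∑ a, ∑ c, ∑ d, g a b c d := Finset.sum_comm
    _ = ∑ b, ∑ a, ∑ d, ∑ c, g a b c d :=
        Finset.sum_congr rfl fun b _ => Finset.sum_congr rfl fun a _ => Finset.sum_comm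
    _ = ∑ b, ∑ d, ∑ a, ∑ c, g a b c d := Finset.sum_congr rfl fun b _ => Finset.sum_comm
    _ = ∑ d, ∑ b, ∑ a, ∑ c, g a b c d := Finset.sum_comm
    _ = ∑ d, ∑ b, ∑ c, ∑ a, g a b c d :=
        Finset.sum_congr rfl fun d _ => Finset.sum_congr rfl fun b _ => Finset.sum_comm
    _ = ∑ d, ∑ c, ∑ b, ∑ a, g a b c d := Finset.sum_congr rfl fun d _ => Finset.sum_comm

theorem rearr_aux {K s : ℕ} (σ p : Fin K → ℝ)
    (hσ0 : ∀ α, 0 ≤ σ α) (hσdec : Antitone σ)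
    (hp0 : ∀ α, 0 ≤ p α) (hp1 : ∀ α, p α ≤ 1) (hps : ∑ α, p α ≤ (s : ℝ)) :
    ∑ α, σ α * p α ≤ ∑ α ∈ Finset.univ.filter (fun α : Fin K => (α : ℕ) < s), σ α := by
  by_cases hKs : K ≤ s
  · have : (Finset.univ.filter (fun α : Fin K => (α : ℕ) < s)) = Finset.univ := by
      refine Finset.filter_true_of_mem fun α _ => lt_of_lt_of_le α.2 hKs
    rw [this]
    refine Finset.sum_le_sum fun α _ => ?_
    calc σ α * p α ≤ σ α * 1 := by
          exact mul_le_mul_of_nonneg_left (hp1 α) (hσ0 α)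
      _ = σ α := mul_one _
  · push_neg at hKs
    set S := Finset.univ.filter (fun α : Fin K => (α : ℕ) < s) with hS
    have hcard : S.card = s := by
      apply Finset.card_eq_of_bijective (fun i hi => (⟨i, hi.trans hKs⟩ : Fin K))
      · intro a ha
        rw [hS, Finset.mem_filter] at ha
        exact ⟨a, ha.2, rfl⟩
      · intro i h
        rw [hS, Finset.mem_filter]
        exact ⟨Finset.mem_univ _, h⟩
      · intro i j hi hj hij
        simpa using congrArg Fin.val hij
    set i0 : Fin K := ⟨s, hKs⟩ with hi0
    set t := σ i0 with ht
    have ht0 : 0 ≤ t := hσ0 i0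
    have hmem : ∀ α : Fin K, α ∈ S ↔ (α : ℕ) < s := by
      intro α; rw [hS, Finset.mem_filter]; simp
    have hsplit := Finset.sum_filter_add_sum_filter_not Finset.univ
      (fun α : Fin K => (α : ℕ) < s) (fun α => σ α * p α)
    have hsplit' := Finset.sum_filter_add_sum_filter_not Finset.univ
      (fun α : Fin K => (α : ℕ) < s) p
    have h1 : ∑ α ∈ Finset.univ.filter (fun α : Fin K => ¬ (α : ℕ) < s), σ α * p α
        ≤ t * ∑ α ∈ Finset.univ.filter (fun α : Fin K => ¬ (α : ℕ) < s), p α := by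
      rw [Finset.mul_sum]
      refine Finset.sum_le_sum fun α hα => ?_
      rw [Finset.mem_filter] at hα
      have : i0 ≤ α := by
        rw [Fin.le_def]; exact Nat.le_of_not_lt hα.2
      exact mul_le_mul_of_nonneg_right (hσdec this) (hp0 α)
    have h2 : ∑ α ∈ Finset.univ.filter (fun α : Fin K => ¬ (α : ℕ) < s), p α
        ≤ (s : ℝ) - ∑ α ∈ S, p α := by
      linarith [hps, hsplit']
    have h3 : ∑ α ∈ S, σ α * p α - t * ∑ α ∈ S, p α
        = ∑ α ∈ S, (σ α - t) * p α := by
      rw [Finset.mul_sum, ← Finset.sum_sub_distrib]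
      exact Finset.sum_congr rfl fun α _ => by ring
    have h4 : ∑ α ∈ S, (σ α - t) * p α ≤ ∑ α ∈ S, (σ α - t) := by
      refine Finset.sum_le_sum fun α hα => ?_
      have hts : t ≤ σ α := by
        apply hσdec
        rw [Fin.le_def]
        exact le_of_lt ((hmem α).mp hα)
      calc (σ α - t) * p α ≤ (σ α - t) * 1 :=
            mul_le_mul_of_nonneg_left (hp1 α) (by linarith)
        _ = σ α - t := mul_one _
    have h5 : ∑ α ∈ S, (σ α - t) = (∑ α ∈ S, σ α) - t * s := by
      rw [Finset.sum_sub_distrib, Finset.sum_const, hcard, nsmul_eq_mul]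
      ring
    have hmul : t * ∑ α ∈ Finset.univ.filter (fun α : Fin K => ¬ (α : ℕ) < s), p α
        ≤ t * ((s : ℝ) - ∑ α ∈ S, p α) := mul_le_mul_of_nonneg_left h2 ht0
    nlinarith [hsplit, h1, hmul, h3, h4, h5]

/-- Overlap of a pure bipartite state with a state of Schmidt rank `s` is bounded
by the sum of the `s` largest Schmidt coefficients. (Here `H₁ ⊗ H₂` is modeled as
`ℂ^(m × n)`, with pure tensors `(u ⊗ v)(x,y) = u x · v y`; `σ` is 0-indexed and
decreasing, so "α ≤ s" in 1-based indexing is `(α : ℕ) < s` here.) -/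
theorem stmt_5 (m n K s : ℕ)
    (e : Fin K → EuclideanSpace ℂ (Fin m)) (et : Fin K → EuclideanSpace ℂ (Fin n))
    (f : Fin s → EuclideanSpace ℂ (Fin m)) (ft : Fin s → EuclideanSpace ℂ (Fin n))
    (he : Orthonormal ℂ e) (het : Orthonormal ℂ et)
    (hf : Orthonormal ℂ f) (hft : Orthonormal ℂ ft)
    (σ : Fin K → ℝ) (τ : Fin s → ℝ)
    (hσ : ∀ α, 0 ≤ σ α) (hτ : ∀ β, 0 ≤ τ β)
    (hσdec : Antitone σ) (hσsum : ∑ α, σ α = 1) (hτsum : ∑ β, τ β = 1)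
    (ψ φ : EuclideanSpace ℂ (Fin m × Fin n))
    (hψ : ∀ p : Fin m × Fin n,
      ψ p = ∑ α, (Real.sqrt (σ α) : ℂ) * e α p.1 * et α p.2)
    (hφ : ∀ p : Fin m × Fin n,
      φ p = ∑ β, (Real.sqrt (τ β) : ℂ) * f β p.1 * ft β p.2) :
    ‖⟪φ, ψ⟫_ℂ‖ ^ 2 ≤ ∑ α ∈ Finset.univ.filter (fun α : Fin K => (α : ℕ) < s), σ α := by
  classical
  set A : Fin s → Fin K → ℂ := fun β α => ⟪f β, e α⟫_ℂ with hA
  set v : Fin s → EuclideanSpace ℂ (Fin n) := fun β => ((Real.sqrt (τ β)) : ℂ) • ft β with hv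
  set w : Fin s → EuclideanSpace ℂ (Fin n) :=
    fun β => ∑ α, (((Real.sqrt (σ α)) : ℂ) * A β α) • et α with hw
  -- Step 1: the overlap as a sum of inner products
  have key : ⟪φ, ψ⟫_ℂ = ∑ β, ⟪v β, w β⟫_ℂ := by
    rw [hv, hw, hA]
    conv_rhs => simp only [inner_sum, inner_smul_left, inner_smul_right, PiLp.inner_apply,
      RCLike.inner_apply, map_mul]
    simp only [PiLp.inner_apply, RCLike.inner_apply, hψ, hφ, map_sum, map_mul,
      Finset.sum_mul_sum, Fintype.sum_prod_type, Finset.sum_mul, Finset.mul_sum]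
    rw [sum_comm4 (fun (x : Fin m) (y : Fin n) (b : Fin s) (a : Fin K) =>
      ((Real.sqrt (σ a)):ℂ) * e a x * et a y *
        ((starRingEnd ℂ) ((Real.sqrt (τ b)):ℂ) * (starRingEnd ℂ) (f b x) * (starRingEnd ℂ) (ft b y))),
      Finset.sum_comm]
    refine Finset.sum_congr rfl fun b _ => Finset.sum_congr rfl fun a _ =>
      Finset.sum_congr rfl fun y _ => Finset.sum_congr rfl fun x _ => ?_
    ring
  -- Pack into an L² direct sum and apply Cauchy–Schwarz
  let V : PiLp 2 (fun _ : Fin s => EuclideanSpace ℂ (Fin n)) := WithLp.toLp 2 v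
  let W : PiLp 2 (fun _ : Fin s => EuclideanSpace ℂ (Fin n)) := WithLp.toLp 2 w
  have hVW : ⟪V, W⟫_ℂ = ∑ β, ⟪v β, w β⟫_ℂ := PiLp.inner_apply V W
  have hcs : ‖⟪φ, ψ⟫_ℂ‖ ^ 2 ≤ ‖V‖ ^ 2 * ‖W‖ ^ 2 := by
    rw [key, ← hVW, ← mul_pow]
    exact pow_le_pow_left₀ (norm_nonneg _) (norm_inner_le_norm V W) 2
  -- Norm of V
  have hVnorm : ‖V‖ ^ 2 = 1 := by
    rw [PiLp.norm_sq_eq_of_L2]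
    rw [← hτsum]
    refine Finset.sum_congr rfl fun β _ => ?_
    show ‖v β‖ ^ 2 = τ β
    rw [hv]
    simp only [norm_smul, Complex.norm_real, Real.norm_eq_abs, mul_pow, hft.1 β, one_pow,
      mul_one, sq_abs, Real.sq_sqrt (hτ β)]
  -- Norm of W
  set p : Fin K → ℝ := fun α => ∑ β, ‖A β α‖ ^ 2 with hp
  have hWnorm : ‖W‖ ^ 2 = ∑ α, σ α * p α := by
    rw [PiLp.norm_sq_eq_of_L2]
    have hwβ : ∀ β, ‖w β‖ ^ 2 = ∑ α, σ α * ‖A β α‖ ^ 2 := by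
      intro β
      have h1 : ⟪w β, w β⟫_ℂ = ∑ α, (starRingEnd ℂ) (((Real.sqrt (σ α)) : ℂ) * A β α) *
          ((((Real.sqrt (σ α)) : ℂ)) * A β α) :=
        het.inner_sum _ _ Finset.univ
      have h2 := inner_self_eq_norm_sq (𝕜 := ℂ) (w β)
      rw [h1] at h2
      rw [← h2, map_sum]
      refine Finset.sum_congr rfl fun α _ => ?_
      rw [RCLike.conj_mul]
      norm_cast
      rw [norm_mul, mul_pow, Complex.norm_real, Real.norm_eq_abs, sq_abs, Real.sq_sqrt (hσ α)]
    rw [Finset.sum_congr rfl fun β _ => hwβ β, Finset.sum_comm]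
    exact Finset.sum_congr rfl fun α _ => by rw [hp, Finset.mul_sum]
  -- bounds on p
  have hp0 : ∀ α, 0 ≤ p α := fun α => Finset.sum_nonneg fun β _ => sq_nonneg _
  have hp1 : ∀ α, p α ≤ 1 := by
    intro α
    have := hf.sum_inner_products_le (e α) (s := Finset.univ)
    rwa [he.1 α, one_pow] at this
  have hps : ∑ α, p α ≤ (s : ℝ) := by
    rw [hp]
    rw [Finset.sum_comm]
    calc ∑ β : Fin s, ∑ α, ‖A β α‖ ^ 2 ≤ ∑ β : Fin s, (1 : ℝ) := by
          refine Finset.sum_le_sum fun β _ => ?_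
          have h1 : ∀ α, ‖A β α‖ ^ 2 = ‖⟪e α, f β⟫_ℂ‖ ^ 2 := fun α => by
            rw [hA]; rw [norm_inner_symm]
          rw [Finset.sum_congr rfl fun α _ => h1 α]
          have := he.sum_inner_products_le (f β) (s := Finset.univ)
          rwa [hf.1 β, one_pow] at this
      _ = (s : ℝ) := by simp
  calc ‖⟪φ, ψ⟫_ℂ‖ ^ 2 ≤ ‖V‖ ^ 2 * ‖W‖ ^ 2 := hcs
    _ = ∑ α, σ α * p α := by rw [hVnorm, hWnorm, one_mul]
    _ ≤ _ := rearr_aux σ p hσ hσdec hp0 hp1 hps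
end

section
/- Let P₀ be an orthogonal projection, Q an operator with ‖Q − P₀‖ ≤ ε, and ρ a density matrix with P = Tr(P₀ ρ). If ε² ≤ P, then Tr(P₀ Q ρ Q†) ≥ (√P − ε)². -/
open Matrix Finset
open scoped Matrix.Norms.L2Operator ComplexOrder

noncomputable def sumSq {n : ℕ} (X : Matrix (Fin n) (Fin n) ℂ) : ℝ :=
  ∑ i, ∑ j, ‖X i j‖ ^ 2

noncomputable def frob {n : ℕ} (X : Matrix (Fin n) (Fin n) ℂ) : ℝ :=
  Real.sqrt (sumSq X)

lemma sumSq_nonneg {n : ℕ} (X : Matrix (Fin n) (Fin n) ℂ) : 0 ≤ sumSq X := by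
  refine Finset.sum_nonneg fun i _ => Finset.sum_nonneg fun j _ => by positivity

lemma frob_nonneg {n : ℕ} (X : Matrix (Fin n) (Fin n) ℂ) : 0 ≤ frob X :=
  Real.sqrt_nonneg _

lemma sq_frob {n : ℕ} (X : Matrix (Fin n) (Fin n) ℂ) : frob X ^ 2 = sumSq X :=
  Real.sq_sqrt (sumSq_nonneg X)

lemma trace_conjTranspose_mul_re {n : ℕ} (X : Matrix (Fin n) (Fin n) ℂ) :
    (Matrix.trace (Xᴴ * X)).re = sumSq X := by
  simp only [Matrix.trace, Matrix.diag, Matrix.mul_apply, Matrix.conjTranspose_apply,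
    sumSq]
  rw [Complex.re_sum]
  rw [Finset.sum_comm]
  congr 1
  ext i
  rw [Complex.re_sum]
  congr 1
  ext j
  rw [Complex.star_def, mul_comm, Complex.mul_conj]
  simp only [Complex.ofReal_re, Complex.normSq_eq_norm_sq]

lemma frob_eq_norm_euclid {n : ℕ} (X : Matrix (Fin n) (Fin n) ℂ) :
    frob X = ‖((WithLp.equiv 2 ((Fin n × Fin n) → ℂ)).symm fun p => X p.1 p.2 :
      EuclideanSpace ℂ (Fin n × Fin n))‖ := by
  rw [EuclideanSpace.norm_eq, frob, sumSq]
  simp only [WithLp.equiv_symm_apply, WithLp.ofLp_toLp]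
  rw [Fintype.sum_prod_type]

lemma frob_add_le {n : ℕ} (A B : Matrix (Fin n) (Fin n) ℂ) :
    frob (A + B) ≤ frob A + frob B := by
  rw [frob_eq_norm_euclid, frob_eq_norm_euclid, frob_eq_norm_euclid]
  have : ((WithLp.equiv 2 ((Fin n × Fin n) → ℂ)).symm fun p => (A + B) p.1 p.2 :
      EuclideanSpace ℂ (Fin n × Fin n)) =
      ((WithLp.equiv 2 ((Fin n × Fin n) → ℂ)).symm fun p => A p.1 p.2) +
      ((WithLp.equiv 2 ((Fin n × Fin n) → ℂ)).symm fun p => B p.1 p.2) := rfl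
  rw [this]
  exact norm_add_le _ _

lemma frob_mul_le {n : ℕ} (M B : Matrix (Fin n) (Fin n) ℂ) :
    frob (M * B) ≤ ‖M‖ * frob B := by
  have key : sumSq (M * B) ≤ ‖M‖ ^ 2 * sumSq B := by
    have e1 : sumSq (M * B) = ∑ j, ∑ i, ‖(M * B) i j‖ ^ 2 := Finset.sum_comm
    have e2 : sumSq B = ∑ j, ∑ i, ‖B i j‖ ^ 2 := Finset.sum_comm
    rw [e1, e2, Finset.mul_sum]
    refine Finset.sum_le_sum fun j _ => ?_
    set v : EuclideanSpace ℂ (Fin n) := (WithLp.equiv 2 _).symm (fun k => B k j) with hv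
    have h1 : ∑ i, ‖(M * B) i j‖ ^ 2 = ‖((EuclideanSpace.equiv (Fin n) ℂ).symm <| M *ᵥ v)‖ ^ 2 := by
      rw [EuclideanSpace.norm_eq, Real.sq_sqrt (by positivity)]
      refine Finset.sum_congr rfl fun i _ => ?_
      show ‖(M * B) i j‖ ^ 2 = ‖(M *ᵥ v) i‖ ^ 2
      rfl
    have h2 : ∑ i, ‖B i j‖ ^ 2 = ‖v‖ ^ 2 := by
      rw [EuclideanSpace.norm_eq, Real.sq_sqrt (by positivity)]
      rfl
    rw [h1, h2, ← mul_pow]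
    exact pow_le_pow_left₀ (norm_nonneg _) (Matrix.l2_opNorm_mulVec M v) 2
  have := Real.sqrt_le_sqrt key
  rw [frob, ]
  calc Real.sqrt (sumSq (M * B)) ≤ Real.sqrt (‖M‖ ^ 2 * sumSq B) := this
    _ = ‖M‖ * frob B := by
        rw [Real.sqrt_mul (by positivity), Real.sqrt_sq (norm_nonneg _)]; rfl

lemma proj_opNorm_le_one {n : ℕ} (P₀ : Matrix (Fin n) (Fin n) ℂ)
    (hproj : P₀ * P₀ = P₀) (hsa : P₀ᴴ = P₀) : ‖P₀‖ ≤ 1 := by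
  have h := Matrix.l2_opNorm_conjTranspose_mul_self P₀
  rw [hsa, hproj] at h
  nlinarith [norm_nonneg P₀]

lemma frob_proj_mul_le {n : ℕ} (P₀ : Matrix (Fin n) (Fin n) ℂ)
    (hproj : P₀ * P₀ = P₀) (hsa : P₀ᴴ = P₀) (Y : Matrix (Fin n) (Fin n) ℂ) :
    frob (P₀ * Y) ≤ frob Y := by
  calc frob (P₀ * Y) ≤ ‖P₀‖ * frob Y := frob_mul_le _ _
    _ ≤ 1 * frob Y := by
        exact mul_le_mul_of_nonneg_right (proj_opNorm_le_one P₀ hproj hsa) (frob_nonneg Y)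
    _ = frob Y := one_mul _

theorem stmt_7 (n : ℕ) (P₀ Q ρ : Matrix (Fin n) (Fin n) ℂ)
    (hproj : P₀ * P₀ = P₀) (hsa : P₀ᴴ = P₀)
    (hρ : ρ.PosSemidef) (htr : ρ.trace = 1)
    (ε : ℝ) (hQ : ‖Q - P₀‖ ≤ ε)
    (P : ℝ) (hP : P = (Matrix.trace (P₀ * ρ)).re) (hεP : ε ^ 2 ≤ P) :
    (Real.sqrt P - ε) ^ 2 ≤ (Matrix.trace (P₀ * Q * ρ * Qᴴ)).re := by
  obtain ⟨S, hS2, hSh⟩ : ∃ S : Matrix (Fin n) (Fin n) ℂ, S * S = ρ ∧ Sᴴ = S := by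
    open scoped MatrixOrder in
    exact ⟨CFC.sqrt ρ, CFC.sqrt_mul_sqrt_self ρ hρ.nonneg, (CFC.sqrt_nonneg ρ).posSemidef.isHermitian⟩
  have hε0 : 0 ≤ ε := le_trans (norm_nonneg _) hQ
  -- sumSq S = 1
  have hfrobS : frob S = 1 := by
    have h1 : sumSq S = 1 := by
      rw [← trace_conjTranspose_mul_re, hSh, hS2, htr]
      simp
    rw [frob, h1, Real.sqrt_one]
  -- sumSq (P₀ * S) = P
  have hPS : sumSq (P₀ * S) = P := by
    have e : (P₀ * S)ᴴ * (P₀ * S) = S * (P₀ * S) := by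
      rw [conjTranspose_mul, hSh, hsa, Matrix.mul_assoc, ← Matrix.mul_assoc P₀ P₀ S, hproj]
    rw [← trace_conjTranspose_mul_re, e, Matrix.trace_mul_comm, Matrix.mul_assoc, hS2, ← hP]
  -- sumSq (P₀ * Q * S) equals the target trace
  have htarget : sumSq (P₀ * Q * S) = (Matrix.trace (P₀ * Q * ρ * Qᴴ)).re := by
    have e : (P₀ * Q * S) * (P₀ * Q * S)ᴴ = (P₀ * (Q * (ρ * Qᴴ))) * P₀ := by
      rw [conjTranspose_mul, conjTranspose_mul, hSh, hsa]
      simp only [Matrix.mul_assoc]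
      rw [← Matrix.mul_assoc S S, hS2]
    rw [← trace_conjTranspose_mul_re, Matrix.trace_mul_comm, e, Matrix.trace_mul_comm,
      ← Matrix.mul_assoc, hproj]
    congr 2
    simp only [Matrix.mul_assoc]
  -- the error term
  have herr : frob (P₀ * ((P₀ - Q) * S)) ≤ ε := by
    calc frob (P₀ * ((P₀ - Q) * S)) ≤ frob ((P₀ - Q) * S) :=
          frob_proj_mul_le P₀ hproj hsa _
      _ ≤ ‖P₀ - Q‖ * frob S := frob_mul_le _ _
      _ = ‖Q - P₀‖ := by rw [hfrobS, mul_one, norm_sub_rev]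
      _ ≤ ε := hQ
  have hdecomp : P₀ * S = P₀ * Q * S + P₀ * ((P₀ - Q) * S) := by
    have : P₀ * Q * S + P₀ * ((P₀ - Q) * S) = (P₀ * P₀) * S := by noncomm_ring
    rw [this, hproj]
  have htri : frob (P₀ * S) ≤ frob (P₀ * Q * S) + frob (P₀ * ((P₀ - Q) * S)) := by
    rw [hdecomp]; exact frob_add_le _ _
  have hmain : Real.sqrt P - ε ≤ frob (P₀ * Q * S) := by
    have hfPS : frob (P₀ * S) = Real.sqrt P := by rw [frob, hPS]
    have := htri
    rw [hfPS] at this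
    linarith [herr]
  have h0 : 0 ≤ Real.sqrt P - ε := by
    have : ε ≤ Real.sqrt P := by
      calc ε = Real.sqrt (ε ^ 2) := (Real.sqrt_sq hε0).symm
        _ ≤ Real.sqrt P := Real.sqrt_le_sqrt hεP
    linarith
  calc (Real.sqrt P - ε) ^ 2 ≤ frob (P₀ * Q * S) ^ 2 := pow_le_pow_left₀ h0 hmain 2
    _ = sumSq (P₀ * Q * S) := sq_frob _
    _ = (Matrix.trace (P₀ * Q * ρ * Qᴴ)).re := htarget
end

section
/- For the depolarized Werner-Holevo channel W_{λ,d}(ρ) = λρ + (1−λ)(Tr(ρ)·I_d − ρᵀ)/(d−1) on d×d complex matrices, the maximal output 2-norm squared over pure input states satisfies sup_{‖ψ‖=1} Tr[W_{λ,d}(|ψ⟩⟨ψ|)²] = ((d−2)λ² + 1)/(d−1), for all λ ∈ [0,1] and d ≥ 2. -/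
open Matrix

/-- The depolarized Werner-Holevo channel
`W_{λ,d}(ρ) = λρ + (1−λ)(Tr(ρ)·I_d − ρᵀ)/(d−1)`. -/
noncomputable def depolWH (lam : ℝ) (d : ℕ) (ρ : Matrix (Fin d) (Fin d) ℂ) :
    Matrix (Fin d) (Fin d) ℂ :=
  (lam : ℂ) • ρ + ((1 - lam : ℂ) / ((d : ℂ) - 1)) • (ρ.trace • (1 : Matrix (Fin d) (Fin d) ℂ) - ρᵀ)

/-- The pure state `|ψ⟩⟨ψ|` as a matrix. -/
noncomputable def pureState {d : ℕ} (ψ : EuclideanSpace ℂ (Fin d)) :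
    Matrix (Fin d) (Fin d) ℂ :=
  Matrix.of fun i j => ψ i * starRingEnd ℂ (ψ j)

lemma psum (d : ℕ) (ψ : EuclideanSpace ℂ (Fin d)) (hψ : ‖ψ‖ = 1) :
    ∑ i : Fin d, ψ i * starRingEnd ℂ (ψ i) = 1 := by
  have h := hψ
  rw [EuclideanSpace.norm_eq] at h
  have h2 : ∑ i, ‖ψ i‖ ^ 2 = 1 := by
    have := Real.sqrt_eq_one.mp h
    simpa [← this]
  calc ∑ i : Fin d, ψ i * starRingEnd ℂ (ψ i)
      = ∑ i : Fin d, ((‖ψ i‖ ^ 2 : ℝ) : ℂ) := by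
        refine Finset.sum_congr rfl fun i _ => ?_
        rw [Complex.mul_conj']; norm_cast
    _ = 1 := by rw [← Complex.ofReal_sum, h2, Complex.ofReal_one]

section
variable (d : ℕ) (ψ : EuclideanSpace ℂ (Fin d)) (hψ : ‖ψ‖ = 1)
include hψ

lemma tr1 : (pureState ψ).trace = 1 := by
  simpa [Matrix.trace, Matrix.diag, pureState] using psum d ψ hψ

lemma trρρ : ((pureState ψ) * (pureState ψ)).trace = 1 := by
  have h := psum d ψ hψ
  simp only [Matrix.trace, Matrix.diag, Matrix.mul_apply, pureState, Matrix.of_apply]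
  rw [Finset.sum_comm]
  calc ∑ j, ∑ i, ψ i * starRingEnd ℂ (ψ j) * (ψ j * starRingEnd ℂ (ψ i))
      = (∑ j, ψ j * starRingEnd ℂ (ψ j)) * (∑ i, ψ i * starRingEnd ℂ (ψ i)) := by
        rw [Finset.sum_mul_sum]
        exact Finset.sum_congr rfl fun j _ => Finset.sum_congr rfl fun i _ => by ring
    _ = 1 := by rw [h]; ring

omit hψ in
lemma trρρt : ((pureState ψ) * (pureState ψ)ᵀ).trace
    = (Complex.normSq (∑ i, ψ i ^ 2) : ℂ) := by
  simp only [Matrix.trace, Matrix.diag, Matrix.mul_apply, pureState,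
    Matrix.transpose_apply, Matrix.of_apply]
  have : ∀ z : ℂ, (Complex.normSq z : ℂ) = z * starRingEnd ℂ z := by
    intro z; rw [Complex.mul_conj]
  rw [this, map_sum, Finset.sum_mul_sum]
  refine Finset.sum_congr rfl fun i _ => Finset.sum_congr rfl fun j _ => ?_
  simp [map_pow]; ring

lemma trρtρt : ((pureState ψ)ᵀ * (pureState ψ)ᵀ).trace = 1 := by
  rw [← Matrix.transpose_mul, Matrix.trace_transpose]
  exact trρρ d ψ hψ

lemma trace_formula (hd : 2 ≤ d) (lam : ℝ) :
    (Matrix.trace (depolWH lam d (pureState ψ) * depolWH lam d (pureState ψ))).re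
    = lam ^ 2 + 2 * lam * (1 - lam) * (1 - Complex.normSq (∑ i, ψ i ^ 2)) / ((d : ℝ) - 1)
      + (1 - lam) ^ 2 / ((d : ℝ) - 1) := by
  have hdne : ((d : ℂ) - 1) ≠ 0 := by
    intro h
    have : (d : ℂ) = 1 := by linear_combination h
    have : (d : ℕ) = 1 := by exact_mod_cast this
    omega
  have hdr : ((d : ℝ) - 1) ≠ 0 := by
    have : (1 : ℝ) < d := by exact_mod_cast (by omega : 1 < d)
    linarith
  set ρ := pureState ψ with hρ
  have h1 := tr1 d ψ hψ
  have h2 := trρρ d ψ hψ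
  have h3 := trρρt d ψ
  have h3' : (ρᵀ * ρ).trace = (Complex.normSq (∑ i, ψ i ^ 2) : ℂ) := by
    rw [Matrix.trace_mul_comm]; exact h3
  have h4 := trρtρt d ψ hψ
  have htrt : ρᵀ.trace = 1 := by rw [Matrix.trace_transpose, h1]
  rw [← hρ] at h1 h2 h3 h4
  have key : Matrix.trace (depolWH lam d ρ * depolWH lam d ρ)
      = ((lam ^ 2 + 2 * lam * (1 - lam) * (1 - Complex.normSq (∑ i, ψ i ^ 2)) / ((d : ℝ) - 1)
      + (1 - lam) ^ 2 / ((d : ℝ) - 1) : ℝ) : ℂ) := by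
    rw [depolWH, h1, one_smul]
    simp only [add_mul, mul_add, Matrix.smul_mul, Matrix.mul_smul, sub_mul, mul_sub,
      Matrix.one_mul, Matrix.mul_one, Matrix.trace_add, Matrix.trace_sub, Matrix.trace_smul,
      smul_smul, smul_eq_mul, Matrix.trace_one, Fintype.card_fin, h1, h2, h3, h3', h4, htrt]
    push_cast
    field_simp
    ring
  rw [key, Complex.ofReal_re]
end

lemma two_sum {M : Type*} [AddCommMonoid M] (d : ℕ) (hd : 2 ≤ d) (f : ℕ → M)
    (hf : ∀ k, 2 ≤ k → f k = 0) : ∑ i : Fin d, f i.val = f 0 + f 1 := by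
  rw [Fin.sum_univ_eq_sum_range]
  rw [← Finset.sum_subset (Finset.range_subset_range.mpr hd)
    (fun x _ hx2 => hf x (by simp at hx2; omega))]
  simp [Finset.sum_range_succ]

noncomputable def gw : ℕ → ℂ := fun k =>
  if k = 0 then (((Real.sqrt 2)⁻¹ : ℝ) : ℂ)
  else if k = 1 then Complex.I * (((Real.sqrt 2)⁻¹ : ℝ) : ℂ) else 0

noncomputable def psiw (d : ℕ) : EuclideanSpace ℂ (Fin d) := WithLp.toLp 2 (fun i : Fin d => gw i.val)

lemma gw_norm (d : ℕ) (hd : 2 ≤ d) : ‖psiw d‖ = 1 := by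
  rw [EuclideanSpace.norm_eq]
  have : ∑ i : Fin d, ‖psiw d i‖ ^ 2 = 1 := by
    rw [show (fun i : Fin d => ‖psiw d i‖ ^ 2) = fun i => (fun k => ‖gw k‖ ^ 2) i.val from rfl]
    rw [two_sum d hd (fun k => ‖gw k‖ ^ 2) (fun k hk => by
      simp only [gw, if_neg (by omega : ¬ k = 0), if_neg (by omega : ¬ k = 1), norm_zero]
      ring)]
    simp [gw, abs_of_nonneg (by positivity : (0:ℝ) ≤ (Real.sqrt 2)⁻¹)]
    norm_num
  rw [this, Real.sqrt_one]

lemma gw_s (d : ℕ) (hd : 2 ≤ d) : ∑ i : Fin d, (psiw d i) ^ 2 = 0 := by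
  rw [show (fun i : Fin d => (psiw d i) ^ 2) = fun i => (fun k => (gw k) ^ 2) i.val from rfl]
  rw [two_sum d hd (fun k => (gw k) ^ 2) (fun k hk => by
    simp only [gw, if_neg (by omega : ¬ k = 0), if_neg (by omega : ¬ k = 1)]; ring)]
  simp only [gw, if_true, if_neg one_ne_zero, reduceIte]
  have h2 : ((Real.sqrt 2 : ℝ) : ℂ) ^ 2 = 2 := by
    norm_cast
    rw [Real.sq_sqrt] <;> norm_num
  have h2ne : ((Real.sqrt 2 : ℝ) : ℂ) ≠ 0 := by
    intro h
    rw [h] at h2; norm_num at h2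
  field_simp [mul_pow, Complex.I_sq]
  simp [Complex.I_sq]

theorem stmt_10 (d : ℕ) (hd : 2 ≤ d) (lam : ℝ) (hlam : lam ∈ Set.Icc (0 : ℝ) 1) :
    IsGreatest
      {t : ℝ | ∃ ψ : EuclideanSpace ℂ (Fin d), ‖ψ‖ = 1 ∧
        t = (Matrix.trace (depolWH lam d (pureState ψ) * depolWH lam d (pureState ψ))).re}
      (((d - 2 : ℝ) * lam ^ 2 + 1) / ((d : ℝ) - 1)) := by
  obtain ⟨hl0, hl1⟩ := hlam
  have hd1 : (0:ℝ) < (d:ℝ) - 1 := by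
    have : (2:ℝ) ≤ d := by exact_mod_cast hd
    linarith
  constructor
  · refine ⟨psiw d, gw_norm d hd, ?_⟩
    rw [trace_formula d (psiw d) (gw_norm d hd) hd lam, gw_s d hd]
    simp only [map_zero]
    field_simp
    ring
  · rintro t ⟨ψ, hψ, rfl⟩
    rw [trace_formula d ψ hψ hd lam]
    set n := Complex.normSq (∑ i, ψ i ^ 2) with hn
    have hn0 : 0 ≤ n := Complex.normSq_nonneg _
    have key : lam ^ 2 + 2 * lam * (1 - lam) * (1 - n) / ((d : ℝ) - 1) + (1 - lam) ^ 2 / ((d : ℝ) - 1)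
        = ((d - 2 : ℝ) * lam ^ 2 + 1) / ((d : ℝ) - 1) - 2 * lam * (1 - lam) * n / ((d : ℝ) - 1) := by
      field_simp
      ring
    rw [key]
    have hpos : 0 ≤ 2 * lam * (1 - lam) * n / ((d : ℝ) - 1) :=
      div_nonneg (mul_nonneg (mul_nonneg (mul_nonneg (by norm_num : (0:ℝ) ≤ 2) hl0) (by linarith)) hn0) (le_of_lt hd1)
    linarith
end

section
/- Let H be a self-adjoint operator on a finite-dimensional Hilbert space with unique ground state ψ₀ of eigenvalue 0 and spectral gap γ > 0 (all other eigenvalues ≥ γ). Let C be any operator with ⟨ψ₀, Cψ₀⟩ = 0, and for α > 0 define the Gaussian-smeared operator (C)_α = √(α/π) ∫ e^{itH} C e^{−itH} e^{−αt²} dt. Then ‖(C)_α ψ₀‖ ≤ e^{−γ²/(4α)} ‖C‖. -/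
open scoped InnerProductSpace
open MeasureTheory Complex

lemma aux_exp_apply_eigen {E : Type*} [NormedAddCommGroup E] [NormedSpace ℂ E] [CompleteSpace E]
    (A : E →L[ℂ] E) (x : E) (c : ℂ) (h : A x = c • x) :
    NormedSpace.exp A x = Complex.exp c • x := by
  have hpow : ∀ k : ℕ, (A ^ k) x = c ^ k • x := by
    intro k
    induction k with
    | zero => simp
    | succ k ih =>
      rw [pow_succ', pow_succ', ContinuousLinearMap.mul_apply, ih, _root_.map_smul, h, smul_smul, mul_comm]
  have hs : Summable fun k : ℕ => ((k.factorial : ℂ))⁻¹ • A ^ k :=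
    NormedSpace.expSeries_summable' (𝕂 := ℂ) A
  have hs' : Summable fun k : ℕ => ((k.factorial : ℂ))⁻¹ * c ^ k := by
    simpa [smul_eq_mul] using NormedSpace.expSeries_summable' (𝕂 := ℂ) c
  rw [NormedSpace.exp_eq_tsum ℂ]
  calc (∑' k : ℕ, ((k.factorial : ℂ))⁻¹ • A ^ k) x
      = ∑' k : ℕ, (((k.factorial : ℂ))⁻¹ • A ^ k) x :=
        (ContinuousLinearMap.apply ℂ E x).map_tsum hs
    _ = ∑' k : ℕ, (((k.factorial : ℂ))⁻¹ * c ^ k) • x := by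
        refine tsum_congr fun k => ?_
        rw [ContinuousLinearMap.smul_apply, hpow k, smul_smul]
    _ = (∑' k : ℕ, ((k.factorial : ℂ))⁻¹ * c ^ k) • x := hs'.tsum_smul_const x
    _ = Complex.exp c • x := by
        rw [Complex.exp_eq_exp_ℂ, NormedSpace.exp_eq_tsum ℂ]
        simp [smul_eq_mul]

lemma aux_norm_exp_le {E : Type*} [NormedAddCommGroup E] [NormedSpace ℂ E] [CompleteSpace E]
    (A : E →L[ℂ] E) : ‖NormedSpace.exp A‖ ≤ Real.exp ‖A‖ := by
  rw [NormedSpace.exp_eq_tsum ℂ]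
  refine (norm_tsum_le_tsum_norm (NormedSpace.norm_expSeries_summable' (𝕂 := ℂ) A)).trans ?_
  rw [Real.exp_eq_exp_ℝ, NormedSpace.exp_eq_tsum ℝ]
  refine Summable.tsum_le_tsum (fun k => ?_) (NormedSpace.norm_expSeries_summable' (𝕂 := ℂ) A)
    (NormedSpace.expSeries_summable' (𝕂 := ℝ) ‖A‖)
  rw [norm_smul, smul_eq_mul]
  have h1 : ‖((k.factorial : ℂ))⁻¹‖ = ((k.factorial : ℝ))⁻¹ := by
    simp
  rw [h1]
  gcongr
  cases k with
  | zero => simp only [pow_zero]; exact ContinuousLinearMap.norm_id_le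
  | succ k => exact norm_pow_le' A k.succ_pos

open scoped InnerProductSpace
open MeasureTheory Complex

set_option maxHeartbeats 1000000 in
set_option synthInstance.maxHeartbeats 400000 in
/-- Exponential decay of the Gaussian-smeared off-ground-state operator applied to
the ground state of a gapped Hamiltonian. -/
theorem stmt_19 (n : ℕ)
    (H C : EuclideanSpace ℂ (Fin n) →L[ℂ] EuclideanSpace ℂ (Fin n))
    (hH : IsSelfAdjoint H)
    (ψ₀ : EuclideanSpace ℂ (Fin n)) (hψ₀ : ‖ψ₀‖ = 1) (hgs : H ψ₀ = 0)
    (γ : ℝ) (hγ : 0 < γ)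
    (hgap : ∀ v : EuclideanSpace ℂ (Fin n), ⟪ψ₀, v⟫_ℂ = 0 →
      γ * ‖v‖ ^ 2 ≤ (⟪v, H v⟫_ℂ).re)
    (hC : ⟪ψ₀, C ψ₀⟫_ℂ = 0)
    (α : ℝ) (hα : 0 < α) :
    ‖(Real.sqrt (α / Real.pi) •
        ∫ t : ℝ, Real.exp (-(α * t ^ 2)) •
          (NormedSpace.exp ((I * (t : ℂ)) • H) ∘L C ∘L
            NormedSpace.exp ((-(I * (t : ℂ))) • H))) ψ₀‖ ≤
      Real.exp (-(γ ^ 2 / (4 * α))) * ‖C‖ := by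
  have hT : (↑H : EuclideanSpace ℂ (Fin n) →ₗ[ℂ] EuclideanSpace ℂ (Fin n)).IsSymmetric :=
    hH.isSymmetric
  have hn : Module.finrank ℂ (EuclideanSpace ℂ (Fin n)) = n := finrank_euclideanSpace_fin
  set b := hT.eigenvectorBasis hn with hbdef
  set μ := hT.eigenvalues hn with hμdef
  have hb : ∀ i, H (b i) = (μ i : ℂ) • b i := fun i =>
    hT.apply_eigenvectorBasis hn i
  set v := C ψ₀ with hvdef
  set c : Fin n → ℂ := fun i => b.repr v i with hcdef
  -- ψ₀ is fixed by the backward evolution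
  have hE2 : ∀ t : ℝ, NormedSpace.exp ((-(I * (t : ℂ))) • H) ψ₀ = ψ₀ := by
    intro t
    have h0 : ((-(I * (t : ℂ))) • H) ψ₀ = (0 : ℂ) • ψ₀ := by
      simp [hgs]
    rw [aux_exp_apply_eigen _ _ _ h0, Complex.exp_zero, one_smul]
  have hE1 : ∀ (t : ℝ) (i : Fin n),
      NormedSpace.exp ((I * (t : ℂ)) • H) (b i) =
        Complex.exp (I * (μ i : ℂ) * (t : ℂ)) • b i := by
    intro t i
    have h0 : ((I * (t : ℂ)) • H) (b i) = (I * (μ i : ℂ) * (t : ℂ)) • b i := by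
      rw [ContinuousLinearMap.smul_apply, hb i, smul_smul,
        show I * (t : ℂ) * (μ i : ℂ) = I * (μ i : ℂ) * (t : ℂ) by ring]
    rw [aux_exp_apply_eigen _ _ _ h0]
  -- integrability of the operator-valued integrand
  set Φ : ℝ → EuclideanSpace ℂ (Fin n) →L[ℂ] EuclideanSpace ℂ (Fin n) := fun t =>
    Real.exp (-(α * t ^ 2)) •
      (NormedSpace.exp ((I * (t : ℂ)) • H) ∘L C ∘L
        NormedSpace.exp ((-(I * (t : ℂ))) • H)) with hΦdef
  have hΦcont : Continuous Φ := by
    have h1 : Continuous fun t : ℝ => NormedSpace.exp ((I * (t : ℂ)) • H) :=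
      (continuous_iff_continuousAt.2 fun x => (NormedSpace.exp_analytic (𝕂 := ℂ) x).continuousAt).comp ((continuous_const.mul Complex.continuous_ofReal).smul
        continuous_const)
    have h2 : Continuous fun t : ℝ => NormedSpace.exp ((-(I * (t : ℂ))) • H) :=
      (continuous_iff_continuousAt.2 fun x => (NormedSpace.exp_analytic (𝕂 := ℂ) x).continuousAt).comp (((continuous_const.mul
        Complex.continuous_ofReal).neg).smul continuous_const)
    exact (Real.continuous_exp.comp ((continuous_const.mul (continuous_pow 2)).neg)).smul
      ((h1.clm_comp continuous_const).clm_comp h2)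
  have hΦbound : ∀ t : ℝ, ‖Φ t‖ ≤
      (Real.exp ((2 * ‖H‖) ^ 2 / (2 * α)) * ‖C‖) * Real.exp (-(α / 2 * t ^ 2)) := by
    intro t
    have hnsmul : ∀ z : ℂ, ‖z • H‖ = ‖z‖ * ‖H‖ := fun z => norm_smul z H
    have hIt : ‖I * (t : ℂ)‖ = |t| := by
      simp
    have h1 : ‖NormedSpace.exp ((I * (t : ℂ)) • H)‖ ≤ Real.exp (|t| * ‖H‖) := by
      refine (aux_norm_exp_le _).trans ?_
      rw [hnsmul, hIt]
    have h2 : ‖NormedSpace.exp ((-(I * (t : ℂ))) • H)‖ ≤ Real.exp (|t| * ‖H‖) := by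
      refine (aux_norm_exp_le _).trans ?_
      rw [hnsmul, norm_neg, hIt]
    have hcomp : ‖NormedSpace.exp ((I * (t : ℂ)) • H) ∘L C ∘L
        NormedSpace.exp ((-(I * (t : ℂ))) • H)‖ ≤
        Real.exp (|t| * ‖H‖) * (‖C‖ * Real.exp (|t| * ‖H‖)) := by
      refine (ContinuousLinearMap.opNorm_comp_le _ _).trans ?_
      have := (ContinuousLinearMap.opNorm_comp_le C
        (NormedSpace.exp ((-(I * (t : ℂ))) • H)))
      refine mul_le_mul h1 (this.trans ?_) (norm_nonneg _) (Real.exp_nonneg _)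
      exact mul_le_mul_of_nonneg_left h2 (norm_nonneg C)
    simp only [hΦdef]
    refine ((ContinuousLinearMap.opNorm_smul_le _ _).trans_eq
      (by rw [Real.norm_eq_abs, Real.abs_exp])).trans ?_
    calc Real.exp (-(α * t ^ 2)) * ‖NormedSpace.exp ((I * (t : ℂ)) • H) ∘L C ∘L
          NormedSpace.exp ((-(I * (t : ℂ))) • H)‖
        ≤ Real.exp (-(α * t ^ 2)) * (Real.exp (|t| * ‖H‖) * (‖C‖ * Real.exp (|t| * ‖H‖))) := by
          exact mul_le_mul_of_nonneg_left hcomp (Real.exp_nonneg _)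
      _ = Real.exp (-(α * t ^ 2) + 2 * (|t| * ‖H‖)) * ‖C‖ := by
          rw [Real.exp_add, two_mul, Real.exp_add]; ring
      _ ≤ Real.exp ((2 * ‖H‖) ^ 2 / (2 * α) + -(α / 2 * t ^ 2)) * ‖C‖ := by
          refine mul_le_mul_of_nonneg_right (Real.exp_le_exp.mpr ?_) (norm_nonneg C)
          rw [← sub_nonneg, show (2 * ‖H‖) ^ 2 / (2 * α) + -(α / 2 * t ^ 2) -
              (-(α * t ^ 2) + 2 * (|t| * ‖H‖)) = (2 * ‖H‖ - α * |t|) ^ 2 / (2 * α) by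
            field_simp; linear_combination (-(α ^ 2)) * _root_.sq_abs t]
          positivity
      _ = (Real.exp ((2 * ‖H‖) ^ 2 / (2 * α)) * ‖C‖) * Real.exp (-(α / 2 * t ^ 2)) := by
          rw [Real.exp_add]; ring
  have hΦint : Integrable Φ := by
    refine Integrable.mono' ?_ hΦcont.aestronglyMeasurable
      (Filter.Eventually.of_forall hΦbound)
    have h := (integrable_exp_neg_mul_sq (half_pos hα)).const_mul
      (Real.exp ((2 * ‖H‖) ^ 2 / (2 * α)) * ‖C‖)
    simpa [neg_mul] using h
  -- eigenvalue lower bound for contributing modes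
  have hψψ : ⟪ψ₀, ψ₀⟫_ℂ = 1 := by
    rw [inner_self_eq_norm_sq_to_K, hψ₀]; norm_num
  have hEig : ∀ i : Fin n, c i ≠ 0 → γ ≤ μ i := by
    intro i hci
    by_cases hμ0 : μ i = 0
    · exfalso
      apply hci
      have horth : ⟪ψ₀, b i - ⟪ψ₀, b i⟫_ℂ • ψ₀⟫_ℂ = 0 := by
        rw [inner_sub_right, inner_smul_right, hψψ, mul_one, sub_self]
      have hHw : H (b i - ⟪ψ₀, b i⟫_ℂ • ψ₀) = 0 := by
        rw [map_sub, ContinuousLinearMap.map_smul, hgs, hb i, hμ0, smul_zero, sub_zero]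
        norm_num
      have hg := hgap _ horth
      rw [hHw, inner_zero_right] at hg
      simp only [Complex.zero_re] at hg
      have hsq : ‖b i - ⟪ψ₀, b i⟫_ℂ • ψ₀‖ ^ 2 = 0 :=
        le_antisymm (by nlinarith) (sq_nonneg _)
      have hn0 : ‖b i - ⟪ψ₀, b i⟫_ℂ • ψ₀‖ = 0 :=
        (pow_eq_zero_iff two_ne_zero).mp hsq
      have hbi : b i = ⟪ψ₀, b i⟫_ℂ • ψ₀ := by
        rw [← sub_eq_zero]; exact norm_eq_zero.mp hn0
      show b.repr v i = 0
      rw [OrthonormalBasis.repr_apply_apply, hbi, inner_smul_left, hC, mul_zero]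
    · have h1 := hT ψ₀ (b i)
      simp only [ContinuousLinearMap.coe_coe] at h1
      rw [hgs, inner_zero_left] at h1
      rw [hb i, inner_smul_right] at h1
      have hμc : ((μ i : ℝ) : ℂ) ≠ 0 := by exact_mod_cast hμ0
      have horth : ⟪ψ₀, b i⟫_ℂ = 0 := ((mul_eq_zero.mp h1.symm).resolve_left hμc)
      have hg := hgap (b i) horth
      rw [hb i, inner_smul_right, inner_self_eq_norm_sq_to_K, b.orthonormal.1 i] at hg
      simpa using hg
  -- evaluate the vector-valued integral
  rw [ContinuousLinearMap.smul_apply, ContinuousLinearMap.integral_apply hΦint]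
  have hpt : ∀ t : ℝ, Φ t ψ₀ = ∑ i, (c i * (Complex.exp (I * (μ i : ℂ) * (t : ℂ)) *
      Complex.exp ((-(α : ℂ)) * (t : ℂ) ^ 2))) • b i := by
    intro t
    rw [hΦdef]
    simp only [ContinuousLinearMap.smul_apply, ContinuousLinearMap.comp_apply, hE2 t]
    have hv : NormedSpace.exp ((I * (t : ℂ)) • H) (C ψ₀) =
        ∑ i, (c i * Complex.exp (I * (μ i : ℂ) * (t : ℂ))) • b i := by
      conv_lhs => rw [show C ψ₀ = v from rfl, ← b.sum_repr v]
      rw [map_sum]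
      refine Finset.sum_congr rfl fun i _ => ?_
      rw [ContinuousLinearMap.map_smul, hE1 t i, smul_smul]
    rw [hv, Finset.smul_sum]
    refine Finset.sum_congr rfl fun i _ => ?_
    rw [← smul_assoc, Complex.real_smul]
    congr 1
    rw [Complex.ofReal_exp,
      show ((-(α * t ^ 2) : ℝ) : ℂ) = (-(α : ℂ)) * (t : ℂ) ^ 2 by push_cast; ring]
    ring
  have hgint : ∀ i : Fin n, Integrable fun t : ℝ =>
      (c i * (Complex.exp (I * (μ i : ℂ) * (t : ℂ)) *
        Complex.exp ((-(α : ℂ)) * (t : ℂ) ^ 2))) • b i := by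
    intro i
    refine Integrable.smul_const (Integrable.const_mul ?_ (c i)) (b i)
    have h0 := integrable_cexp_quadratic (show (0:ℝ) < ((α:ℂ)).re by simpa using hα)
      (I * (μ i : ℂ)) 0
    refine h0.congr (Filter.Eventually.of_forall fun x => ?_)
    show Complex.exp ((-(α : ℂ)) * (x : ℂ) ^ 2 + I * (μ i : ℂ) * (x : ℂ) + 0) =
      Complex.exp (I * (μ i : ℂ) * (x : ℂ)) * Complex.exp ((-(α : ℂ)) * (x : ℂ) ^ 2)
    rw [← Complex.exp_add]
    congr 1
    ring
  have hgauss : ∀ i : Fin n, (∫ t : ℝ, Complex.exp (I * (μ i : ℂ) * (t : ℂ)) *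
      Complex.exp ((-(α : ℂ)) * (t : ℂ) ^ 2)) =
      ((Real.pi : ℂ) / (α : ℂ)) ^ (1/2 : ℂ) * Complex.exp (-(μ i : ℂ) ^ 2 / (4 * (α : ℂ))) := by
    intro i
    exact fourierIntegral_gaussian (b := (α : ℂ)) (by simpa using hα) ((μ i : ℂ))
  have hint2 : (∫ t : ℝ, Φ t ψ₀) = ∑ i,
      (c i * (((Real.pi : ℂ) / (α : ℂ)) ^ (1/2 : ℂ) *
        Complex.exp (-(μ i : ℂ) ^ 2 / (4 * (α : ℂ))))) • b i := by
    simp only [hpt]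
    rw [integral_finset_sum _ (fun i _ => hgint i)]
    refine Finset.sum_congr rfl fun i _ => ?_
    rw [integral_smul_const, integral_const_mul, hgauss i]
  rw [hint2]
  -- simplify the scalar factors
  have hπ : (0 : ℝ) < Real.pi := Real.pi_pos
  have h1 : ((Real.pi : ℂ) / (α : ℂ)) ^ (1/2 : ℂ) = ((Real.sqrt (Real.pi / α) : ℝ) : ℂ) := by
    rw [show (1/2 : ℂ) = ((1/2 : ℝ) : ℂ) by norm_num, ← Complex.ofReal_div,
      ← Complex.ofReal_cpow (by positivity), ← Real.sqrt_eq_rpow]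
  have hs1 : Real.sqrt (α / Real.pi) * Real.sqrt (Real.pi / α) = 1 := by
    rw [← Real.sqrt_mul (by positivity), show α / Real.pi * (Real.pi / α) = 1 by field_simp]
    exact Real.sqrt_one
  have hfin : Real.sqrt (α / Real.pi) • (∑ i,
      (c i * (((Real.pi : ℂ) / (α : ℂ)) ^ (1/2 : ℂ) *
        Complex.exp (-(μ i : ℂ) ^ 2 / (4 * (α : ℂ))))) • b i) =
      ∑ i, (((Real.exp (-(μ i ^ 2 / (4 * α))) : ℝ) : ℂ) * c i) • b i := by
    rw [Finset.smul_sum]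
    refine Finset.sum_congr rfl fun i _ => ?_
    rw [← smul_assoc, Complex.real_smul, h1,
      show Complex.exp (-(μ i : ℂ) ^ 2 / (4 * (α : ℂ))) =
        ((Real.exp (-(μ i ^ 2 / (4 * α))) : ℝ) : ℂ) by
          rw [Complex.ofReal_exp]; congr 1; push_cast; ring]
    congr 1
    rw [show ((Real.sqrt (α / Real.pi) : ℝ) : ℂ) * (c i *
        (((Real.sqrt (Real.pi / α) : ℝ) : ℂ) * ((Real.exp (-(μ i ^ 2 / (4 * α))) : ℝ) : ℂ))) =
        (((Real.sqrt (α / Real.pi) : ℝ) : ℂ) * ((Real.sqrt (Real.pi / α) : ℝ) : ℂ)) *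
        (((Real.exp (-(μ i ^ 2 / (4 * α))) : ℝ) : ℂ) * c i) by ring,
      ← Complex.ofReal_mul, hs1, Complex.ofReal_one, one_mul]
  rw [hfin]
  -- final norm estimate
  set K := Real.exp (-(γ ^ 2 / (4 * α))) with hK
  set z : Fin n → ℂ := fun i => ((Real.exp (-(μ i ^ 2 / (4 * α))) : ℝ) : ℂ) * c i with hz
  have hcoef : ∀ i, ‖z i‖ ≤ K * ‖c i‖ := by
    intro i
    rw [hz]
    simp only [norm_mul, Complex.norm_real, Real.norm_eq_abs, Real.abs_exp]
    by_cases hci : c i = 0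
    · simp [hci]
    · have hμγ := hEig i hci
      have hle : Real.exp (-(μ i ^ 2 / (4 * α))) ≤ K := by
        rw [hK]
        apply Real.exp_le_exp.mpr
        have h2 : γ ^ 2 ≤ μ i ^ 2 := by nlinarith
        have h4 : (0 : ℝ) < 4 * α := by linarith
        have h5 : γ ^ 2 / (4 * α) ≤ μ i ^ 2 / (4 * α) := by gcongr
        linarith
      exact mul_le_mul_of_nonneg_right hle (norm_nonneg _)
  have hrepr : ∀ i, b.repr (∑ j, z j • b j) i = z i := by
    intro i
    rw [OrthonormalBasis.repr_apply_apply]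
    exact b.orthonormal.inner_right_fintype z i
  have hnormw : ‖∑ j, z j • b j‖ = Real.sqrt (∑ i, ‖z i‖ ^ 2) := by
    rw [← b.repr.norm_map (∑ j, z j • b j), EuclideanSpace.norm_eq]
    congr 1
    refine Finset.sum_congr rfl fun i _ => ?_
    rw [hrepr i]
  have hnormv : ‖v‖ = Real.sqrt (∑ i, ‖c i‖ ^ 2) := by
    rw [← b.repr.norm_map v, EuclideanSpace.norm_eq]
  have hvC : ‖v‖ ≤ ‖C‖ := by
    calc ‖v‖ ≤ ‖C‖ * ‖ψ₀‖ := C.le_opNorm ψ₀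
    _ = ‖C‖ := by rw [hψ₀, mul_one]
  have hKpos : (0 : ℝ) < K := Real.exp_pos _
  rw [hnormw]
  calc Real.sqrt (∑ i, ‖z i‖ ^ 2) ≤ Real.sqrt (∑ i, (K * ‖c i‖) ^ 2) := by
        apply Real.sqrt_le_sqrt
        refine Finset.sum_le_sum fun i _ => ?_
        have := hcoef i
        nlinarith [norm_nonneg (z i), norm_nonneg (c i)]
    _ = K * Real.sqrt (∑ i, ‖c i‖ ^ 2) := by
        rw [show (∑ i, (K * ‖c i‖) ^ 2) = K ^ 2 * ∑ i, ‖c i‖ ^ 2 by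
            rw [Finset.mul_sum]; exact Finset.sum_congr rfl fun i _ => by ring,
          Real.sqrt_mul (sq_nonneg K), Real.sqrt_sq hKpos.le]
    _ = K * ‖v‖ := by rw [hnormv]
    _ ≤ K * ‖C‖ := mul_le_mul_of_nonneg_left hvC hKpos.le
end
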